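/- Let n ≥ 2, x ∈ ℂⁿ, and B_x := C_x* C_x (conjugate transpose times C_x). Suppose there exists m ∈ ℕ, m ≥ 1, such that in the first row (b_0, b_1, …, b_{n-1}) of B_xᵐ there is an index k with b_k ≠ 0 and b_{(k+1) mod n} ≠ 0, and every entry b_j of that row satisfies |arg b_j| < π/(2n) whenever b_j ≠ 0 (arg denoting the principal argument in (−π, π]). Then for every n-th root of unity t ≠ 1 one has |c(t)| < |c(1)|, where c(t) = x_0 + x_1 t + ⋯ + x_{n-1} t^{n-1}. -/

import Mathlib

open Matrix

/-- The `n × n` complex circulant matrix whose `(j,k)` entry is `x ((k - j) mod n)`. -/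
noncomputable def circulantC {n : ℕ} (x : Fin n → ℂ) : Matrix (Fin n) (Fin n) ℂ :=
  Matrix.of fun j k => x (k - j)

/-- The symbol `c(t) = x₀ + x₁ t + ⋯ + x_{n-1} t^{n-1}` of the circulant matrix `C_x`. -/
noncomputable def symbolC {n : ℕ} (x : Fin n → ℂ) (t : ℂ) : ℂ :=
  ∑ j : Fin n, x j * t ^ (j : ℕ)

section Aux

variable {n : ℕ}

lemma pow_mod_root {t : ℂ} (ht : t ^ n = 1) (a : ℕ) : t ^ (a % n) = t ^ a := by
  conv_rhs => rw [← Nat.div_add_mod a n]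
  rw [pow_add, pow_mul, ht, one_pow, one_mul]

lemma pow_val_add {t : ℂ} (ht : t ^ n = 1) (i j : Fin n) :
    t ^ ((i + j : Fin n) : ℕ) = t ^ (i : ℕ) * t ^ (j : ℕ) := by
  rw [Fin.val_add, pow_mod_root ht, pow_add]

variable [NeZero n]

def IsCircForm (M : Matrix (Fin n) (Fin n) ℂ) : Prop :=
  ∀ j k, M j k = M 0 (k - j)

lemma isCircForm_circulantC (x : Fin n → ℂ) : IsCircForm (circulantC x) := by
  intro j k
  simp [circulantC]

lemma IsCircForm.conjTranspose {M : Matrix (Fin n) (Fin n) ℂ} (hM : IsCircForm M) :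
    IsCircForm Mᴴ := by
  intro j k
  simp only [Matrix.conjTranspose_apply]
  rw [hM k j, hM (k - j) 0]
  congr 2
  abel

lemma IsCircForm.mul {A B : Matrix (Fin n) (Fin n) ℂ} (hA : IsCircForm A)
    (hB : IsCircForm B) : IsCircForm (A * B) := by
  intro j k
  simp only [Matrix.mul_apply]
  refine Fintype.sum_equiv (Equiv.subRight j) _ _ (fun l => ?_)
  simp only [Equiv.subRight_apply]
  have h1 : (k - j) - (l - j) = k - l := by abel
  rw [hA j l, hB l k, hB (l - j) (k - j), h1]

lemma IsCircForm.one : IsCircForm (1 : Matrix (Fin n) (Fin n) ℂ) := by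
  intro j k
  simp only [Matrix.one_apply]
  have h : ((0 : Fin n) = k - j) ↔ (j = k) := by
    rw [eq_comm, sub_eq_zero, eq_comm]
  simp only [h]

lemma IsCircForm.pow {B : Matrix (Fin n) (Fin n) ℂ} (hB : IsCircForm B) (m : ℕ) :
    IsCircForm (B ^ m) := by
  induction m with
  | zero => simpa using IsCircForm.one
  | succ m ih => rw [pow_succ]; exact ih.mul hB

lemma mulVec_eig {t : ℂ} (ht : t ^ n = 1) {M : Matrix (Fin n) (Fin n) ℂ}
    (hM : IsCircForm M) :
    M *ᵥ (fun j => t ^ (j : ℕ)) = (∑ i, M 0 i * t ^ (i : ℕ)) • ((fun j => t ^ (j : ℕ)) : Fin n → ℂ) := by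
  funext j
  simp only [Matrix.mulVec, dotProduct, Pi.smul_apply, smul_eq_mul, Finset.sum_mul]
  refine Fintype.sum_equiv (Equiv.subRight j) _ _ (fun k => ?_)
  rw [hM j k]
  simp only [Equiv.subRight_apply]
  have : t ^ (k : ℕ) = t ^ ((k - j : Fin n) : ℕ) * t ^ (j : ℕ) := by
    rw [← pow_val_add ht, sub_add_cancel]
  rw [this]; ring

end Aux

section Eig

variable {n : ℕ} [NeZero n] {t : ℂ} (x : Fin n → ℂ)

lemma abs_root (ht : t ^ n = 1) : ‖t‖ = 1 := by
  have h : ‖t‖ ^ n = 1 := by rw [← norm_pow, ht, norm_one]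
  have h0 : 0 ≤ ‖t‖ := norm_nonneg t
  exact (pow_left_inj₀ h0 zero_le_one (NeZero.ne n)).mp (by rw [h, one_pow])

lemma pow_neg_val (ht : t ^ n = 1) (i : Fin n) :
    t ^ ((-i : Fin n) : ℕ) = (starRingEnd ℂ) (t ^ (i : ℕ)) := by
  have h1 : t ^ ((-i : Fin n) : ℕ) * t ^ (i : ℕ) = 1 := by
    rw [← pow_val_add ht, neg_add_cancel, Fin.val_zero, pow_zero]
  have h2 : ‖t ^ (i : ℕ)‖ = 1 := by
    rw [norm_pow, abs_root ht, one_pow]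
  rw [← Complex.inv_eq_conj h2]
  exact eq_inv_of_mul_eq_one_left h1

lemma eig_C (ht : t ^ n = 1) :
    circulantC x *ᵥ (fun j => t ^ (j : ℕ)) =
      symbolC x t • ((fun j => t ^ (j : ℕ)) : Fin n → ℂ) := by
  rw [mulVec_eig ht (isCircForm_circulantC x)]
  congr 1
  simp [circulantC, symbolC]

lemma eig_CH (ht : t ^ n = 1) :
    (circulantC x)ᴴ *ᵥ (fun j => t ^ (j : ℕ)) =
      (starRingEnd ℂ) (symbolC x t) • ((fun j => t ^ (j : ℕ)) : Fin n → ℂ) := by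
  rw [mulVec_eig ht (isCircForm_circulantC x).conjTranspose]
  congr 1
  rw [symbolC, map_sum]
  refine Fintype.sum_equiv (Equiv.neg (Fin n)) _ _ (fun i => ?_)
  have hp : (starRingEnd ℂ) (t ^ ((-i : Fin n) : ℕ)) = t ^ (i : ℕ) := by
    have := (pow_neg_val ht (-i)).symm
    rwa [neg_neg] at this
  simp only [Equiv.neg_apply, Matrix.conjTranspose_apply, _root_.map_mul, hp,
    Complex.star_def]
  simp [circulantC, zero_sub]

lemma eig_Bm (ht : t ^ n = 1) (m : ℕ) :
    (((circulantC x)ᴴ * circulantC x) ^ m) *ᵥ (fun j => t ^ (j : ℕ)) =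
      ((starRingEnd ℂ) (symbolC x t) * symbolC x t) ^ m •
        ((fun j => t ^ (j : ℕ)) : Fin n → ℂ) := by
  induction m with
  | zero => simp [Matrix.one_mulVec]
  | succ m ih =>
    rw [pow_succ, ← Matrix.mulVec_mulVec, ← Matrix.mulVec_mulVec]
    simp only [eig_C x ht, Matrix.mulVec_smul, eig_CH x ht, ih, pow_succ]
    ext j
    simp only [Pi.smul_apply, smul_eq_mul]
    ring

lemma sum_row_eq (ht : t ^ n = 1) (m : ℕ) :
    ∑ i, (((circulantC x)ᴴ * circulantC x) ^ m) 0 i * t ^ (i : ℕ) =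
      ((starRingEnd ℂ) (symbolC x t) * symbolC x t) ^ m := by
  have hcirc := (((isCircForm_circulantC x).conjTranspose).mul (isCircForm_circulantC x)).pow m
  have h1 := mulVec_eig ht hcirc
  rw [eig_Bm x ht m] at h1
  have h2 := congrFun h1 0
  simpa using h2.symm

end Eig

section Analytic

open Real

lemma cos_bound {n : ℕ} (hn : 2 ≤ n) {β θ : ℝ} (hβ : |β| < π / (2 * n))
    (hθ1 : 2 * π / n ≤ |θ|) (hθ2 : |θ| ≤ π) :
    Real.cos (β + θ) < Real.cos β := by
  have hπ : 0 < π := Real.pi_pos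
  have hn' : (2 : ℝ) ≤ (n : ℝ) := by exact_mod_cast hn
  have hn0 : (0 : ℝ) < n := by linarith
  have ha0 : 0 < π / (2 * n) := by positivity
  have h4 : π / (2 * n) ≤ π / 4 := by
    apply div_le_div_of_nonneg_left hπ.le (by norm_num) (by linarith)
  have key1 : 3 * π / (2 * n) < |β + θ| := by
    have : |θ| - |β| ≤ |β + θ| := by
      have := abs_sub_abs_le_abs_sub θ (-β)
      simp only [sub_neg_eq_add] at this
      calc |θ| - |β| = |θ| - |(-β)| := by rw [abs_neg]
        _ ≤ |θ + β| := this
        _ = |β + θ| := by rw [add_comm]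
    have h2 : 2 * π / n - π / (2 * n) ≤ |θ| - |β| := by
      have := hβ.le
      linarith
    have h3 : 2 * π / n - π / (2 * n) = 3 * π / (2 * n) := by
      field_simp; ring
    linarith
  have key2 : |β + θ| ≤ 2 * π - 3 * π / (2 * n) := by
    have h1 : |β + θ| ≤ |β| + |θ| := abs_add_le β θ
    have h2 : |β| + |θ| < π / (2 * n) + π := by linarith [hβ]
    have h5 : 3 * π / (2 * n) = 3 * (π / (2 * n)) := by ring
    linarith
  have ha_le_pi : 3 * π / (2 * n) ≤ π := by
    have h5 : 3 * π / (2 * n) = 3 * (π / (2 * n)) := by ring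
    linarith
  have hcosψ : Real.cos (β + θ) ≤ Real.cos (3 * π / (2 * n)) := by
    rw [← Real.cos_abs (β + θ)]
    rcases le_or_gt (|β + θ|) π with hle | hgt
    · exact Real.cos_le_cos_of_nonneg_of_le_pi (le_of_lt (by positivity)) hle key1.le
    · rw [← Real.cos_two_pi_sub]
      apply Real.cos_le_cos_of_nonneg_of_le_pi (le_of_lt (by positivity))
      · linarith
      · linarith
  have h1 : Real.cos (3 * π / (2 * n)) < Real.cos (π / (2 * n)) := by
    apply Real.cos_lt_cos_of_nonneg_of_le_pi ha0.le ha_le_pi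
    rw [div_lt_div_iff₀ (by positivity) (by positivity)]
    nlinarith
  have h2 : Real.cos (π / (2 * n)) < Real.cos β := by
    rw [← Real.cos_abs β]
    exact Real.cos_lt_cos_of_nonneg_of_le_pi (abs_nonneg β) (by linarith) hβ
  linarith

lemma arg_root_lb {n : ℕ} (hn : 2 ≤ n) {u : ℂ} (hu : u ^ n = 1) (hune : u ≠ 1) :
    2 * π / n ≤ |u.arg| := by
  haveI : NeZero n := ⟨by omega⟩
  have habs : ‖u‖ = 1 := abs_root hu
  have hu' : u = Complex.exp (u.arg * Complex.I) := by
    conv_lhs => rw [← Complex.norm_mul_exp_arg_mul_I u]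
    rw [habs, Complex.ofReal_one, one_mul]
  have hn0 : (0 : ℝ) < n := by positivity
  have hexp : Complex.exp ((n : ℂ) * (u.arg * Complex.I)) = 1 := by
    rw [Complex.exp_nat_mul, ← hu', hu]
  obtain ⟨k, hk⟩ := Complex.exp_eq_one_iff.mp hexp
  have hk' : (n : ℝ) * u.arg = k * (2 * π) := by
    have := congrArg Complex.im hk
    simpa [Complex.mul_im, Complex.ofReal_im, Complex.ofReal_re] using this
  have hk0 : k ≠ 0 := by
    intro h0
    rw [h0] at hk'
    simp only [Int.cast_zero, zero_mul] at hk'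
    have harg : u.arg = 0 := by
      have : (n : ℝ) ≠ 0 := ne_of_gt hn0
      exact (mul_eq_zero.mp hk').resolve_left this
    rw [harg] at hu'
    simp at hu'
    exact hune hu'
  have hk1 : (1 : ℝ) ≤ |(k : ℝ)| := by
    have : (1 : ℤ) ≤ |k| := Int.one_le_abs hk0
    exact_mod_cast this
  have habs' : (n : ℝ) * |u.arg| = |(k : ℝ)| * (2 * π) := by
    have : |(n : ℝ) * u.arg| = |(k : ℝ) * (2 * π)| := by rw [hk']
    rwa [abs_mul, abs_mul, abs_of_nonneg hn0.le, abs_of_nonneg (by positivity : (0:ℝ) ≤ 2 * π)] at this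
  rw [div_le_iff₀ hn0]
  nlinarith [Real.pi_pos]

lemma term_lt {n : ℕ} (hn : 2 ≤ n) {b u : ℂ} (hb : b ≠ 0)
    (harg : |b.arg| < π / (2 * n)) (hu : u ^ n = 1) (hune : u ≠ 1) :
    (b * u).re < b.re := by
  haveI : NeZero n := ⟨by omega⟩
  have habsu : ‖u‖ = 1 := abs_root hu
  have hb' : b = (‖b‖ : ℂ) * Complex.exp (b.arg * Complex.I) :=
    (Complex.norm_mul_exp_arg_mul_I b).symm
  have hu' : u = Complex.exp (u.arg * Complex.I) := by
    conv_lhs => rw [← Complex.norm_mul_exp_arg_mul_I u]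
    rw [habsu, Complex.ofReal_one, one_mul]
  have hbu : b * u = (‖b‖ : ℂ) * Complex.exp (↑(b.arg + u.arg) * Complex.I) := by
    conv_lhs => rw [hb', hu']
    rw [Complex.ofReal_add, add_mul, Complex.exp_add]
    ring
  have hre1 : (b * u).re = ‖b‖ * Real.cos (b.arg + u.arg) := by
    rw [hbu, Complex.re_ofReal_mul, Complex.exp_ofReal_mul_I_re]
  have hre2 : b.re = ‖b‖ * Real.cos b.arg := by
    conv_lhs => rw [hb']
    rw [Complex.re_ofReal_mul, Complex.exp_ofReal_mul_I_re]
  rw [hre1, hre2]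
  have hlb := arg_root_lb hn hu hune
  have hub := Complex.abs_arg_le_pi u
  have hcos := cos_bound hn harg hlb hub
  have hbpos : 0 < ‖b‖ := norm_pos_iff.mpr hb
  exact mul_lt_mul_of_pos_left hcos hbpos

end Analytic

theorem stmt14 (n : ℕ) (hn : 2 ≤ n) (x : Fin n → ℂ)
    (h : ∃ m : ℕ, 1 ≤ m ∧
      (∃ k : Fin n,
        (((circulantC x)ᴴ * circulantC x) ^ m) ⟨0, by omega⟩ k ≠ 0 ∧
        (((circulantC x)ᴴ * circulantC x) ^ m) ⟨0, by omega⟩ (k + ⟨1, by omega⟩) ≠ 0) ∧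
      ∀ j : Fin n,
        (((circulantC x)ᴴ * circulantC x) ^ m) ⟨0, by omega⟩ j ≠ 0 →
        |Complex.arg ((((circulantC x)ᴴ * circulantC x) ^ m) ⟨0, by omega⟩ j)| <
          Real.pi / (2 * n)) :
    ∀ t : ℂ, t ^ n = 1 → t ≠ 1 →
      ‖symbolC x t‖ < ‖symbolC x 1‖ := by
  haveI : NeZero n := ⟨by omega⟩
  obtain ⟨m, _hm, ⟨k, hk1, hk2⟩, harg⟩ := h
  have h0 : (⟨0, by omega⟩ : Fin n) = 0 := by ext; simp
  have h1 : (⟨1, by omega⟩ : Fin n) = 1 := by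
    ext; simp [Fin.val_one', Nat.mod_eq_of_lt (by omega : 1 < n)]
  rw [h0] at hk1 hk2 harg
  rw [h1] at hk2
  set b : Fin n → ℂ := fun j => (((circulantC x)ᴴ * circulantC x) ^ m) 0 j with hb
  intro t ht htne
  have key : ∀ s : ℂ, s ^ n = 1 →
      ∑ i, b i * s ^ (i : ℕ) = ((Complex.normSq (symbolC x s) : ℂ)) ^ m := by
    intro s hs
    rw [hb, sum_row_eq x hs m]
    congr 1
    rw [mul_comm, Complex.mul_conj]
  have hval1 : ((1 : Fin n) : ℕ) = 1 := by
    rw [Fin.val_one']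
    exact Nat.mod_eq_of_lt (by omega)
  have hret : (Complex.normSq (symbolC x t)) ^ m < (Complex.normSq (symbolC x 1)) ^ m := by
    have e1 : ((Complex.normSq (symbolC x t)) ^ m : ℝ) = (∑ i, b i * t ^ (i : ℕ)).re := by
      rw [key t ht, ← Complex.ofReal_pow, Complex.ofReal_re]
    have e2 : ((Complex.normSq (symbolC x 1)) ^ m : ℝ) = (∑ i, b i * (1:ℂ) ^ (i : ℕ)).re := by
      rw [key 1 (one_pow n), ← Complex.ofReal_pow, Complex.ofReal_re]
    rw [e1, e2, Complex.re_sum, Complex.re_sum]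
    have hterm : ∀ i : Fin n, (b i * t ^ (i : ℕ)).re ≤ (b i * (1:ℂ) ^ (i : ℕ)).re := by
      intro i
      rw [one_pow, mul_one]
      by_cases hbi : b i = 0
      · simp [hbi]
      by_cases hti : t ^ (i : ℕ) = 1
      · rw [hti, mul_one]
      · have hroot : (t ^ (i : ℕ)) ^ n = 1 := by
          rw [← pow_mul, mul_comm, pow_mul, ht, one_pow]
        exact le_of_lt (term_lt hn hbi (harg i hbi) hroot hti)
    refine Finset.sum_lt_sum (fun i _ => hterm i) ?_
    by_cases htk : t ^ (k : ℕ) = 1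
    · refine ⟨k + 1, Finset.mem_univ _, ?_⟩
      have htk1 : t ^ ((k + 1 : Fin n) : ℕ) ≠ 1 := by
        rw [pow_val_add ht, hval1, pow_one, htk, one_mul]
        exact htne
      have hroot : (t ^ ((k + 1 : Fin n) : ℕ)) ^ n = 1 := by
        rw [← pow_mul, mul_comm, pow_mul, ht, one_pow]
      rw [one_pow, mul_one]
      exact term_lt hn hk2 (harg (k + 1) hk2) hroot htk1
    · refine ⟨k, Finset.mem_univ _, ?_⟩
      have hroot : (t ^ (k : ℕ)) ^ n = 1 := by
        rw [← pow_mul, mul_comm, pow_mul, ht, one_pow]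
      rw [one_pow, mul_one]
      exact term_lt hn hk1 (harg k hk1) hroot htk
  have hlt : Complex.normSq (symbolC x t) < Complex.normSq (symbolC x 1) := by
    by_contra hge
    push_neg at hge
    exact absurd hret (not_lt.mpr (pow_le_pow_left₀ (Complex.normSq_nonneg _) hge m))
  rw [Complex.norm_def, Complex.norm_def]
  exact Real.sqrt_lt_sqrt (Complex.normSq_nonneg _) hlt
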